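/- For every γ = (γ₁,γ₂,γ₃,γ₄) ∈ ℤ⁴, the following contiguity relations hold in ℂ[z₁,z₂,z₃,z₄]: z₁·F_γ = −z₃·F_{γ+e₁−e₃} + (γ₁+γ₃+1)·F_{γ+e₁}, and z₄·F_γ = −z₃·F_{γ+e₄−e₃} + (γ₃+γ₄+1)·F_{γ+e₄}. -/

import Mathlib

open MvPolynomial Finset

/-!
Extend `z ^ k / k!` by zero to negative `k`. Then
`z * (z ^ k / k!) = (k + 1) * z ^ (k + 1) / (k + 1)!` holds for every integer `k`, and `F_γ`
is the sum over all `n` of products of four such terms, so both relations can be checked term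
by term on a common range of `n`. In the first, multiplying by `z₁` produces the coefficient
`γ₁ + n + 1`, multiplying by `z₃` produces `γ₃ − n`, and `(γ₁ + γ₃ + 1) − (γ₃ − n) = γ₁ + n + 1`;
the second is the same computation with `z₄`.
-/

/-- The hypergeometric Γ-series `F_γ` for the lattice `B = ℤ⟨(1,-1,-1,1)⟩`,
as a polynomial in `ℂ[z₁,z₂,z₃,z₄]`. -/
noncomputable def GammaSeries (γ : Fin 4 → ℤ) : MvPolynomial (Fin 4) ℂ :=
  ∑ n ∈ Finset.Icc (max (-γ 0) (-γ 3)) (min (γ 1) (γ 2)),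
    MvPolynomial.C ((((γ 0 + n).toNat.factorial * (γ 1 - n).toNat.factorial *
        (γ 2 - n).toNat.factorial * (γ 3 + n).toNat.factorial : ℕ) : ℂ))⁻¹ *
      (X 0 ^ (γ 0 + n).toNat * X 1 ^ (γ 1 - n).toNat *
        X 2 ^ (γ 2 - n).toNat * X 3 ^ (γ 3 + n).toNat)

section DividedPower

variable {σ R : Type*} [Field R]

noncomputable def divFactPow (i : σ) (k : ℤ) : MvPolynomial σ R :=
  if 0 ≤ k then C (k.toNat.factorial : R)⁻¹ * X i ^ k.toNat else 0

theorem divFactPow_of_neg {i : σ} {k : ℤ} (hk : k < 0) :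
    (divFactPow i k : MvPolynomial σ R) = 0 :=
  if_neg hk.not_ge

theorem divFactPow_natCast (i : σ) (m : ℕ) :
    (divFactPow i m : MvPolynomial σ R) = C (m.factorial : R)⁻¹ * X i ^ m := by
  simp [divFactPow]

theorem X_mul_divFactPow [CharZero R] (i : σ) (k : ℤ) :
    X i * (divFactPow i k : MvPolynomial σ R) =
      ((k + 1 : ℤ) : MvPolynomial σ R) * divFactPow i (k + 1) := by
  obtain hk | hk := lt_or_ge k 0
  · rw [divFactPow_of_neg hk, mul_zero]
    obtain hk' | hk' := (by omega : k + 1 < 0 ∨ k + 1 = 0)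
    · rw [divFactPow_of_neg hk', mul_zero]
    · rw [hk', Int.cast_zero, zero_mul]
  · lift k to ℕ using hk
    have hcoeff : ((k + 1 : ℕ) : R) * ((k + 1).factorial : R)⁻¹ = (k.factorial : R)⁻¹ := by
      rw [Nat.factorial_succ]; push_cast; field_simp
    rw [show (k : ℤ) + 1 = ((k + 1 : ℕ) : ℤ) by push_cast; rfl, divFactPow_natCast,
      divFactPow_natCast, Int.cast_natCast, ← map_natCast C, ← mul_assoc (C _), ← map_mul, hcoeff,
      pow_succ]
    ring

end DividedPower

noncomputable def gammaTerm (γ : Fin 4 → ℤ) (n : ℤ) : MvPolynomial (Fin 4) ℂ :=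
  divFactPow 0 (γ 0 + n) * divFactPow 1 (γ 1 - n) * divFactPow 2 (γ 2 - n) * divFactPow 3 (γ 3 + n)

theorem gammaTerm_eq_zero {γ : Fin 4 → ℤ} {n : ℤ}
    (hn : n ∉ Icc (max (-γ 0) (-γ 3)) (min (γ 1) (γ 2))) : gammaTerm γ n = 0 := by
  simp only [mem_Icc, max_le_iff, le_min_iff, not_and_or, not_le] at hn
  rcases hn with (h | h) | h | h
  · rw [gammaTerm, divFactPow_of_neg (by omega : γ 0 + n < 0)]; ring
  · rw [gammaTerm, divFactPow_of_neg (by omega : γ 3 + n < 0)]; ring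
  · rw [gammaTerm, divFactPow_of_neg (by omega : γ 1 - n < 0)]; ring
  · rw [gammaTerm, divFactPow_of_neg (by omega : γ 2 - n < 0)]; ring

theorem gammaSeries_eq_sum_gammaTerm {γ : Fin 4 → ℤ} {lo hi : ℤ}
    (hlo : lo ≤ max (-γ 0) (-γ 3)) (hhi : min (γ 1) (γ 2) ≤ hi) :
    GammaSeries γ = ∑ n ∈ Icc lo hi, gammaTerm γ n := by
  rw [GammaSeries, ← sum_subset (Icc_subset_Icc hlo hhi) fun n _ hn => gammaTerm_eq_zero hn]
  refine sum_congr rfl fun n hn => ?_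
  simp only [mem_Icc, max_le_iff, le_min_iff] at hn
  simp only [gammaTerm, divFactPow, if_pos (by omega : 0 ≤ γ 0 + n),
    if_pos (by omega : 0 ≤ γ 1 - n), if_pos (by omega : 0 ≤ γ 2 - n), if_pos (by omega : 0 ≤ γ 3 + n)]
  push_cast
  simp only [mul_inv, map_mul]
  ring

theorem X_zero_mul_gammaTerm (γ : Fin 4 → ℤ) (n : ℤ) :
    X 0 * gammaTerm γ n =
      -(X 2) * gammaTerm (γ + Pi.single 0 1 - Pi.single 2 1) n +
        C ((γ 0 + γ 2 + 1 : ℤ) : ℂ) * gammaTerm (γ + Pi.single 0 1) n := by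
  have h0 := X_mul_divFactPow (R := ℂ) (0 : Fin 4) (γ 0 + n)
  have h2 := X_mul_divFactPow (R := ℂ) (2 : Fin 4) (γ 2 - 1 - n)
  rw [show γ 0 + n + 1 = γ 0 + 1 + n by ring] at h0
  rw [show γ 2 - 1 - n + 1 = γ 2 - n by ring] at h2
  simp +decide only [gammaTerm, Pi.add_apply, Pi.sub_apply, Pi.single_apply, if_true, if_false,
    add_zero, sub_zero]
  rw [map_intCast]
  push_cast at *
  linear_combination (divFactPow 1 (γ 1 - n) * divFactPow 2 (γ 2 - n) * divFactPow 3 (γ 3 + n)) * h0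
    + (divFactPow 0 (γ 0 + 1 + n) * divFactPow 1 (γ 1 - n) * divFactPow 3 (γ 3 + n)) * h2

theorem X_three_mul_gammaTerm (γ : Fin 4 → ℤ) (n : ℤ) :
    X 3 * gammaTerm γ n =
      -(X 2) * gammaTerm (γ + Pi.single 3 1 - Pi.single 2 1) n +
        C ((γ 2 + γ 3 + 1 : ℤ) : ℂ) * gammaTerm (γ + Pi.single 3 1) n := by
  have h3 := X_mul_divFactPow (R := ℂ) (3 : Fin 4) (γ 3 + n)
  have h2 := X_mul_divFactPow (R := ℂ) (2 : Fin 4) (γ 2 - 1 - n)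
  rw [show γ 3 + n + 1 = γ 3 + 1 + n by ring] at h3
  rw [show γ 2 - 1 - n + 1 = γ 2 - n by ring] at h2
  simp +decide only [gammaTerm, Pi.add_apply, Pi.sub_apply, Pi.single_apply, if_true, if_false,
    add_zero, sub_zero]
  rw [map_intCast]
  push_cast at *
  linear_combination (divFactPow 0 (γ 0 + n) * divFactPow 1 (γ 1 - n) * divFactPow 2 (γ 2 - n)) * h3
    + (divFactPow 0 (γ 0 + n) * divFactPow 1 (γ 1 - n) * divFactPow 3 (γ 3 + 1 + n)) * h2

/-- The contiguity relations obtained from the homogeneity equations: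
`z₁ F_γ = −z₃ F_{γ+e₁−e₃} + (γ₁+γ₃+1) F_{γ+e₁}` and
`z₄ F_γ = −z₃ F_{γ+e₄−e₃} + (γ₃+γ₄+1) F_{γ+e₄}`. -/
theorem gammaSeries_contiguity' (γ : Fin 4 → ℤ) :
    X 0 * GammaSeries γ =
      -(X 2) * GammaSeries (γ + Pi.single 0 1 - Pi.single 2 1) +
        C ((γ 0 + γ 2 + 1 : ℤ) : ℂ) * GammaSeries (γ + Pi.single 0 1) ∧
    X 3 * GammaSeries γ =
      -(X 2) * GammaSeries (γ + Pi.single 3 1 - Pi.single 2 1) +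
        C ((γ 2 + γ 3 + 1 : ℤ) : ℂ) * GammaSeries (γ + Pi.single 3 1) := by
  have hsum : ∀ δ : Fin 4 → ℤ, max (-γ 0) (-γ 3) - 1 ≤ max (-δ 0) (-δ 3) →
      min (δ 1) (δ 2) ≤ min (γ 1) (γ 2) →
      GammaSeries δ = ∑ n ∈ Icc (max (-γ 0) (-γ 3) - 1) (min (γ 1) (γ 2)), gammaTerm δ n :=
    fun δ => gammaSeries_eq_sum_gammaTerm
  rw [hsum γ, hsum (γ + Pi.single 0 1 - Pi.single 2 1), hsum (γ + Pi.single 0 1),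
    hsum (γ + Pi.single 3 1 - Pi.single 2 1), hsum (γ + Pi.single 3 1)]
  · simp only [mul_sum, ← sum_add_distrib, X_zero_mul_gammaTerm, X_three_mul_gammaTerm, and_self]
  all_goals simp <;> omega
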